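/- Let m, n, p, r, s be positive natural numbers, let A be a real m×m matrix that is an additive combination of a scalar and a constant matrix (A = c·𝟙_{m×m} + s'·I_m for some reals c, s'), and let B be a real m×s matrix. Then ρ_m(A·B) = ρ_{mn}(μ^{p×n}_n(A) · μ^{n×r}_n(B)) = ρ_{mn}(μ^{p×n}_n(A)) · ρ_{mn}(μ^{n×r}_n(B)). -/

import Mathlib

open Matrix BigOperators

/-- The matrix valuation ρ_m: sum of all entries divided by m. -/
noncomputable def rho {α β : Type*} [Fintype α] [Fintype β]
    (m : ℕ) (A : Matrix α β ℝ) : ℝ :=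
  (∑ i, ∑ j, A i j) / (m : ℝ)

/-- The all-ones matrix. -/
def allOnes (p q : ℕ) : Matrix (Fin p) (Fin q) ℝ := fun _ _ => 1

/-- The numeric representation μ^{p×q}_n extended entrywise to a matrix:
each entry `A i j` is replaced by the constant p×q block `(n * A i j / (p*q)) • 𝟙`. -/
noncomputable def muMat (n p q : ℕ) {r s : ℕ} (A : Matrix (Fin r) (Fin s) ℝ) :
    Matrix (Fin r × Fin p) (Fin s × Fin q) ℝ :=
  fun ik jl => n * A ik.1 jl.1 / (p * q : ℕ)

/-!
The block representation is multiplicative, `μ^{p×n}_n(A) μ^{n×r}_n(B) = μ^{p×r}_n(AB)`: a product of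
two entries is `A_it B_tj / (p r)`, and the `n` indices of the inner block restore the factor `n`.
It multiplies the entry sum by `n`, so `ρ_{mn} ∘ μ = ρ_m`. Everything thus reduces to
`ρ_m(AB) = ρ_m(A) ρ_m(B)`, which holds because every column of `c • 𝟙 + s' • I` sums to `c m + s'`.
-/

section ColumnSums

variable {ι κ ν : Type*} [Fintype ι] [Fintype κ] [Fintype ν]

theorem sum_sum_mul_of_colSum_eq (A : Matrix ι κ ℝ) (B : Matrix κ ν ℝ) (σ : ℝ)
    (hA : ∀ k, ∑ i, A i k = σ) :
    ∑ i, ∑ l, (A * B) i l = σ * ∑ k, ∑ l, B k l := by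
  calc ∑ i, ∑ l, (A * B) i l = ∑ l, ∑ k, (∑ i, A i k) * B k l := by
        simp only [mul_apply, Finset.sum_mul]
        rw [Finset.sum_comm]
        exact Finset.sum_congr rfl fun l _ => Finset.sum_comm
    _ = σ * ∑ k, ∑ l, B k l := by
        simp only [hA, ← Finset.mul_sum]
        rw [Finset.sum_comm]

theorem rho_mul_of_colSum_eq {m : ℕ} (A : Matrix (Fin m) (Fin m) ℝ) (B : Matrix (Fin m) κ ℝ)
    (σ : ℝ) (hA : ∀ k, ∑ i, A i k = σ) :
    rho m (A * B) = rho m A * rho m B := by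
  rcases Nat.eq_zero_or_pos m with rfl | hm
  · simp [rho]
  have hsumA : ∑ i, ∑ k, A i k = m * σ := by
    rw [Finset.sum_comm (f := fun i k => A i k)]
    simp [hA]
  have hm' : (m : ℝ) ≠ 0 := by positivity
  simp only [rho, sum_sum_mul_of_colSum_eq A B σ hA, hsumA]
  field_simp

end ColumnSums

theorem colSum_smul_allOnes_add_smul_one (m : ℕ) (c s' : ℝ) (k : Fin m) :
    ∑ i, (c • allOnes m m + s' • (1 : Matrix (Fin m) (Fin m) ℝ)) i k = c * m + s' := by
  simp [allOnes, one_apply, Finset.sum_add_distrib, mul_comm]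

theorem muMat_mul_muMat (n p r : ℕ) {a b c : ℕ} (A : Matrix (Fin a) (Fin b) ℝ)
    (B : Matrix (Fin b) (Fin c) ℝ) :
    muMat n p n A * muMat n n r B = muMat n p r (A * B) := by
  rcases Nat.eq_zero_or_pos n with rfl | hn
  · ext; simp [muMat, mul_apply]
  ext ⟨i, k⟩ ⟨j, l⟩
  have hn' : (n : ℝ) ≠ 0 := by positivity
  simp only [muMat, mul_apply, Fintype.sum_prod_type, Finset.sum_const, Finset.card_univ,
    Fintype.card_fin, nsmul_eq_mul, Nat.cast_mul, Finset.mul_sum, Finset.sum_div]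
  refine Finset.sum_congr rfl fun t _ => ?_
  field_simp

theorem sum_sum_muMat (n p q : ℕ) (hp : 0 < p) (hq : 0 < q) {a b : ℕ}
    (A : Matrix (Fin a) (Fin b) ℝ) :
    ∑ ik, ∑ jl, muMat n p q A ik jl = n * ∑ i, ∑ j, A i j := by
  have hp' : (p : ℝ) ≠ 0 := by positivity
  have hq' : (q : ℝ) ≠ 0 := by positivity
  simp only [muMat, Fintype.sum_prod_type, Finset.sum_const, Finset.card_univ,
    Fintype.card_fin, nsmul_eq_mul, Nat.cast_mul, Finset.mul_sum]
  refine Finset.sum_congr rfl fun i _ => Finset.sum_congr rfl fun j _ => ?_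
  field_simp

theorem rho_muMat (m : ℕ) {n : ℕ} (hn : 0 < n) {p q : ℕ} (hp : 0 < p) (hq : 0 < q) {a b : ℕ}
    (A : Matrix (Fin a) (Fin b) ℝ) :
    rho (m * n) (muMat n p q A) = rho m A := by
  have hn' : (n : ℝ) ≠ 0 := by positivity
  rw [rho, rho, sum_sum_muMat n p q hp hq, Nat.cast_mul, mul_comm (m : ℝ),
    mul_div_mul_left _ _ hn']

theorem stmt_8_general (m n p r s : ℕ) (hn : 0 < n) (hp : 0 < p)
    (hr : 0 < r)
    (A : Matrix (Fin m) (Fin m) ℝ)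
    (hA : ∃ c s' : ℝ, A = c • allOnes m m + s' • (1 : Matrix (Fin m) (Fin m) ℝ))
    (B : Matrix (Fin m) (Fin s) ℝ) :
    rho m (A * B) = rho (m * n) (muMat n p n A * muMat n n r B) ∧
    rho (m * n) (muMat n p n A * muMat n n r B) =
      rho (m * n) (muMat n p n A) * rho (m * n) (muMat n n r B) := by
  obtain ⟨c, s', rfl⟩ := hA
  rw [muMat_mul_muMat, rho_muMat m hn hp hr, rho_muMat m hn hp hn, rho_muMat m hn hn hr]
  exact ⟨rfl, rho_mul_of_colSum_eq _ B _ (colSum_smul_allOnes_add_smul_one m c s')⟩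

theorem stmt_8 (m n p r s : ℕ) (hm : 0 < m) (hn : 0 < n) (hp : 0 < p)
    (hr : 0 < r) (hs : 0 < s)
    (A : Matrix (Fin m) (Fin m) ℝ)
    (hA : ∃ c s' : ℝ, A = c • allOnes m m + s' • (1 : Matrix (Fin m) (Fin m) ℝ))
    (B : Matrix (Fin m) (Fin s) ℝ) :
    rho m (A * B) = rho (m * n) (muMat n p n A * muMat n n r B) ∧
    rho (m * n) (muMat n p n A * muMat n n r B) =
      rho (m * n) (muMat n p n A) * rho (m * n) (muMat n n r B) :=
  stmt_8_general m n p r s hn hp hr A hA B
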